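/- arXiv:2008.06845 — 2 statements merged into one kernel-verified Lean document; each statement's English description precedes it below -/
import Mathlib

section
/- (Optimal intercept for the drifted LQR.) Fix a ∈ ℝ^d and K ∈ ℝ^{k×d} with A − BK invertible, and assume Γ := A Q^{-1} Aᵀ + B R^{-1} Bᵀ is invertible. For b ∈ ℝ^k set μ_{K,b} := −(A − BK)^{-1}(a + Bb) and J₂(K,b) := μ_{K,b}ᵀ (Q + Kᵀ R K) μ_{K,b} − 2 μ_{K,b}ᵀ Kᵀ R b + bᵀ R b. Then the intercept b^K := −( K Q^{-1} Aᵀ + R^{-1} Bᵀ ) Γ^{-1} a minimizes J₂(K,·) over ℝ^k, i.e. J₂(K,b) ≥ J₂(K,b^K) for all b ∈ ℝ^k, and the minimum value is J₂(K,b^K) = aᵀ Γ^{-1} a, which does not depend on K. -/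
open Matrix MeasureTheory

noncomputable section

attribute [local instance] Matrix.normedAddCommGroup Matrix.normedSpace

/-- A square real matrix is stable if every complex eigenvalue has strictly negative real part. -/
def IsStable {n : ℕ} (M : Matrix (Fin n) (Fin n) ℝ) : Prop :=
  ∀ z ∈ spectrum ℂ (M.map (algebraMap ℝ ℂ)), z.re < 0

/-- Stationary covariance `Σ_K = ∫₀^∞ exp((A-BK)τ) D Dᵀ exp((A-BK)ᵀ τ) dτ`. -/
def SigmaK {d k : ℕ} (A : Matrix (Fin d) (Fin d) ℝ) (B : Matrix (Fin d) (Fin k) ℝ)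
    (D : Matrix (Fin d) (Fin d) ℝ) (K : Matrix (Fin k) (Fin d) ℝ) :
    Matrix (Fin d) (Fin d) ℝ :=
  ∫ τ in Set.Ioi (0 : ℝ),
    NormedSpace.exp (τ • (A - B * K)) * (D * Dᵀ) * NormedSpace.exp (τ • (A - B * K)ᵀ)

/-- Value matrix `P_K = ∫₀^∞ exp((A-BK)ᵀ τ) (Q + Kᵀ R K) exp((A-BK) τ) dτ`. -/
def PmatK {d k : ℕ} (A : Matrix (Fin d) (Fin d) ℝ) (B : Matrix (Fin d) (Fin k) ℝ)
    (Q : Matrix (Fin d) (Fin d) ℝ) (R : Matrix (Fin k) (Fin k) ℝ)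
    (K : Matrix (Fin k) (Fin d) ℝ) : Matrix (Fin d) (Fin d) ℝ :=
  ∫ τ in Set.Ioi (0 : ℝ),
    NormedSpace.exp (τ • (A - B * K)ᵀ) * (Q + Kᵀ * R * K) * NormedSpace.exp (τ • (A - B * K))

/-- `E_K = R K - Bᵀ P_K`. -/
def EmatK {d k : ℕ} (A : Matrix (Fin d) (Fin d) ℝ) (B : Matrix (Fin d) (Fin k) ℝ)
    (Q : Matrix (Fin d) (Fin d) ℝ) (R : Matrix (Fin k) (Fin k) ℝ)
    (K : Matrix (Fin k) (Fin d) ℝ) : Matrix (Fin k) (Fin d) ℝ :=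
  R * K - Bᵀ * PmatK A B Q R K

/-- Ergodic cost `J(K) = tr((Q + Kᵀ R K) Σ_K)`. -/
def Jcost {d k : ℕ} (A : Matrix (Fin d) (Fin d) ℝ) (B : Matrix (Fin d) (Fin k) ℝ)
    (D : Matrix (Fin d) (Fin d) ℝ) (Q : Matrix (Fin d) (Fin d) ℝ)
    (R : Matrix (Fin k) (Fin k) ℝ) (K : Matrix (Fin k) (Fin d) ℝ) : ℝ :=
  Matrix.trace ((Q + Kᵀ * R * K) * SigmaK A B D K)

/-- Spectral norm (operator norm w.r.t. Euclidean norms) of a real matrix. -/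
def specNorm {m n : ℕ} (M : Matrix (Fin m) (Fin n) ℝ) : ℝ :=
  ‖LinearMap.toContinuousLinearMap (Matrix.toEuclideanLin M)‖

/-- Minimum singular value of a square real matrix. -/
def sigmaMin {n : ℕ} (M : Matrix (Fin n) (Fin n) ℝ) : ℝ :=
  sInf {r | ∃ x : EuclideanSpace ℝ (Fin n), ‖x‖ = 1 ∧ r = ‖Matrix.toEuclideanLin M x‖}

/-- Frobenius norm of a real matrix. -/
def frobNorm {m n : ℕ} (M : Matrix (Fin m) (Fin n) ℝ) : ℝ :=
  Real.sqrt (∑ i, ∑ j, (M i j) ^ 2)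

/-- Euclidean norm of a real vector. -/
def vecNorm {n : ℕ} (v : Fin n → ℝ) : ℝ :=
  Real.sqrt (∑ i, (v i) ^ 2)

/-- Stationary mean `μ_{K,b} = -(A - BK)⁻¹ (a + B b)` for the drifted LQR. -/
def muKb {d k : ℕ} (A : Matrix (Fin d) (Fin d) ℝ) (B : Matrix (Fin d) (Fin k) ℝ)
    (K : Matrix (Fin k) (Fin d) ℝ) (a : Fin d → ℝ) (b : Fin k → ℝ) : Fin d → ℝ :=
  -((A - B * K)⁻¹ *ᵥ (a + B *ᵥ b))

/-- `J₂(K,b) = μᵀ (Q + KᵀRK) μ - 2 μᵀ Kᵀ R b + bᵀ R b` with `μ = μ_{K,b}`. -/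
def J2cost {d k : ℕ} (A : Matrix (Fin d) (Fin d) ℝ) (B : Matrix (Fin d) (Fin k) ℝ)
    (Q : Matrix (Fin d) (Fin d) ℝ) (R : Matrix (Fin k) (Fin k) ℝ)
    (K : Matrix (Fin k) (Fin d) ℝ) (a : Fin d → ℝ) (b : Fin k → ℝ) : ℝ :=
  muKb A B K a b ⬝ᵥ ((Q + Kᵀ * R * K) *ᵥ muKb A B K a b) -
    2 * (muKb A B K a b ⬝ᵥ ((Kᵀ * R) *ᵥ b)) + b ⬝ᵥ (R *ᵥ b)

/-!
Put `u := K μ - b`. Then `J₂(K,b) = μᵀ Q μ + uᵀ R u`, and as `b` varies the pair `(μ_{K,b}, u)`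
runs exactly through the affine set `A x - B u = -a`, which does not involve `K`. So `J₂(K,·)`
is minimised by the solution of the equality-constrained quadratic program
`min xᵀ Q x + uᵀ R u` subject to `A x - B u = -a`. Its Lagrange conditions `Q x = -Aᵀ g`,
`R u = Bᵀ g` with `Γ g = a` are sufficient by convexity, and give the value `gᵀ Γ g = aᵀ Γ⁻¹ a`.
-/

namespace Matrix

variable {m n p : Type*} [Fintype m] [Fintype n] [Fintype p]

lemma mulVec_nonsing_inv_mulVec {α : Type*} [CommRing α] [DecidableEq n] {M : Matrix n n α}
    (hM : IsUnit M) (v : n → α) : M *ᵥ (M⁻¹ *ᵥ v) = v := by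
  rw [mulVec_mulVec, mul_nonsing_inv _ ((isUnit_iff_isUnit_det M).mp hM), one_mulVec]

lemma nonsing_inv_mulVec_mulVec {α : Type*} [CommRing α] [DecidableEq n] {M : Matrix n n α}
    (hM : IsUnit M) (v : n → α) : M⁻¹ *ᵥ (M *ᵥ v) = v := by
  rw [mulVec_mulVec, nonsing_inv_mul _ ((isUnit_iff_isUnit_det M).mp hM), one_mulVec]

lemma IsSymm.dotProduct_mulVec_comm {M : Matrix n n ℝ} (hM : M.IsSymm) (x y : n → ℝ) :
    x ⬝ᵥ M *ᵥ y = y ⬝ᵥ M *ᵥ x := by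
  conv_lhs => rw [← hM.eq]
  exact dotProduct_transpose_mulVec M x y

lemma IsSymm.dotProduct_mulVec_sub_sub {M : Matrix n n ℝ} (hM : M.IsSymm) (x y : n → ℝ) :
    (x - y) ⬝ᵥ M *ᵥ (x - y) = x ⬝ᵥ M *ᵥ x - 2 * (x ⬝ᵥ M *ᵥ y) + y ⬝ᵥ M *ᵥ y := by
  rw [mulVec_sub, sub_dotProduct, dotProduct_sub, dotProduct_sub, hM.dotProduct_mulVec_comm y x]
  ring

/-- The tangent-plane inequality for the convex function `x ↦ xᵀ M x` at `y`. -/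
lemma PosSemidef.two_mul_dotProduct_mulVec_sub_le {M : Matrix n n ℝ} (hM : M.PosSemidef)
    (x y : n → ℝ) : 2 * (x ⬝ᵥ M *ᵥ y) - y ⬝ᵥ M *ᵥ y ≤ x ⬝ᵥ M *ᵥ x := by
  have hsq := hM.dotProduct_mulVec_nonneg (x - y)
  rw [star_trivial, (isHermitian_iff_isSymm.mp hM.1).dotProduct_mulVec_sub_sub] at hsq
  linarith

section QuadraticProgram

variable {A : Matrix p m ℝ} {B : Matrix p n ℝ} {Q : Matrix m m ℝ} {R : Matrix n n ℝ}
  {g : p → ℝ} {xs : m → ℝ} {us : n → ℝ}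

lemma dotProduct_mulVec_add_eq_of_stationary (hQ : Q *ᵥ xs = -(Aᵀ *ᵥ g))
    (hR : R *ᵥ us = Bᵀ *ᵥ g) (x : m → ℝ) (u : n → ℝ) :
    x ⬝ᵥ Q *ᵥ xs + u ⬝ᵥ R *ᵥ us = -((A *ᵥ x - B *ᵥ u) ⬝ᵥ g) := by
  rw [hQ, hR, dotProduct_neg, dotProduct_transpose_mulVec, dotProduct_transpose_mulVec,
    sub_dotProduct, dotProduct_comm g, dotProduct_comm g]
  ring

/-- Sufficiency of the Lagrange conditions for `min xᵀ Q x + uᵀ R u` subject to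
`A x - B u = A xs - B us`. -/
lemma PosSemidef.dotProduct_mulVec_add_le_of_stationary (hQ : Q.PosSemidef)
    (hR : R.PosSemidef) (hQxs : Q *ᵥ xs = -(Aᵀ *ᵥ g)) (hRus : R *ᵥ us = Bᵀ *ᵥ g)
    {x : m → ℝ} {u : n → ℝ} (hcon : A *ᵥ x - B *ᵥ u = A *ᵥ xs - B *ᵥ us) :
    xs ⬝ᵥ Q *ᵥ xs + us ⬝ᵥ R *ᵥ us ≤ x ⬝ᵥ Q *ᵥ x + u ⬝ᵥ R *ᵥ u := by
  have hpair := dotProduct_mulVec_add_eq_of_stationary hQxs hRus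
  have hx := hQ.two_mul_dotProduct_mulVec_sub_le x xs
  have hu := hR.two_mul_dotProduct_mulVec_sub_le u us
  have hsame : x ⬝ᵥ Q *ᵥ xs + u ⬝ᵥ R *ᵥ us = xs ⬝ᵥ Q *ᵥ xs + us ⬝ᵥ R *ᵥ us := by
    rw [hpair, hpair, hcon]
  linarith

end QuadraticProgram

end Matrix

section DriftedLQR

variable {d k : ℕ} {A : Matrix (Fin d) (Fin d) ℝ} {B : Matrix (Fin d) (Fin k) ℝ}
  {K : Matrix (Fin k) (Fin d) ℝ} {a : Fin d → ℝ}

lemma J2cost_eq_dotProduct_add (Q : Matrix (Fin d) (Fin d) ℝ) {R : Matrix (Fin k) (Fin k) ℝ}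
    (hR : R.IsSymm) (b : Fin k → ℝ) :
    J2cost A B Q R K a b = muKb A B K a b ⬝ᵥ Q *ᵥ muKb A B K a b +
      (K *ᵥ muKb A B K a b - b) ⬝ᵥ R *ᵥ (K *ᵥ muKb A B K a b - b) := by
  set μ := muKb A B K a b
  have hquad : μ ⬝ᵥ (Kᵀ * R * K) *ᵥ μ = (K *ᵥ μ) ⬝ᵥ R *ᵥ (K *ᵥ μ) := by
    rw [Matrix.mul_assoc, ← mulVec_mulVec, dotProduct_transpose_mulVec, ← mulVec_mulVec,
      dotProduct_comm]
  have hcross : μ ⬝ᵥ (Kᵀ * R) *ᵥ b = (K *ᵥ μ) ⬝ᵥ R *ᵥ b := by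
    rw [← mulVec_mulVec, dotProduct_transpose_mulVec, dotProduct_comm]
  rw [J2cost, hR.dotProduct_mulVec_sub_sub, add_mulVec, dotProduct_add, hquad, hcross]
  ring

lemma mulVec_muKb_sub (hAK : IsUnit (A - B * K)) (b : Fin k → ℝ) :
    A *ᵥ muKb A B K a b - B *ᵥ (K *ᵥ muKb A B K a b - b) = -a := by
  have hμ : (A - B * K) *ᵥ muKb A B K a b = -(a + B *ᵥ b) := by
    rw [muKb, mulVec_neg, mulVec_nonsing_inv_mulVec hAK]
  rw [sub_mulVec, ← mulVec_mulVec] at hμ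
  rw [mulVec_sub]
  linear_combination hμ

lemma muKb_mulVec_sub_eq (hAK : IsUnit (A - B * K)) {x : Fin d → ℝ} {u : Fin k → ℝ}
    (hcon : A *ᵥ x - B *ᵥ u = -a) : muKb A B K a (K *ᵥ x - u) = x := by
  have hrhs : a + B *ᵥ (K *ᵥ x - u) = -((A - B * K) *ᵥ x) := by
    rw [mulVec_sub, sub_mulVec, ← mulVec_mulVec]
    linear_combination hcon
  rw [muKb, hrhs, mulVec_neg, neg_neg, nonsing_inv_mulVec_mulVec hAK]

end DriftedLQR

theorem optimal_intercept_general {d k : ℕ}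
    (A : Matrix (Fin d) (Fin d) ℝ) (B : Matrix (Fin d) (Fin k) ℝ)
    (Q : Matrix (Fin d) (Fin d) ℝ) (R : Matrix (Fin k) (Fin k) ℝ)
    (hQ : Q.PosDef) (hR : R.PosDef)
    (a : Fin d → ℝ) (K : Matrix (Fin k) (Fin d) ℝ)
    (hAK : IsUnit (A - B * K))
    (hΓ : IsUnit (A * Q⁻¹ * Aᵀ + B * R⁻¹ * Bᵀ)) :
    (∀ b : Fin k → ℝ,
      J2cost A B Q R K a
        (-((K * Q⁻¹ * Aᵀ + R⁻¹ * Bᵀ) *ᵥ ((A * Q⁻¹ * Aᵀ + B * R⁻¹ * Bᵀ)⁻¹ *ᵥ a))) ≤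
      J2cost A B Q R K a b) ∧
    J2cost A B Q R K a
        (-((K * Q⁻¹ * Aᵀ + R⁻¹ * Bᵀ) *ᵥ ((A * Q⁻¹ * Aᵀ + B * R⁻¹ * Bᵀ)⁻¹ *ᵥ a))) =
      a ⬝ᵥ ((A * Q⁻¹ * Aᵀ + B * R⁻¹ * Bᵀ)⁻¹ *ᵥ a) := by
  set Γ := A * Q⁻¹ * Aᵀ + B * R⁻¹ * Bᵀ
  set g := Γ⁻¹ *ᵥ a
  set xs := -(Q⁻¹ *ᵥ (Aᵀ *ᵥ g))
  set us := R⁻¹ *ᵥ (Bᵀ *ᵥ g)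
  have hQxs : Q *ᵥ xs = -(Aᵀ *ᵥ g) := by
    rw [mulVec_neg, mulVec_nonsing_inv_mulVec hQ.isUnit]
  have hRus : R *ᵥ us = Bᵀ *ᵥ g := mulVec_nonsing_inv_mulVec hR.isUnit _
  have hcon : A *ᵥ xs - B *ᵥ us = -a := by
    rw [← mulVec_nonsing_inv_mulVec hΓ a]
    simp only [xs, us, Γ, mulVec_neg, add_mulVec, ← mulVec_mulVec]
    abel
  have hbK : -((K * Q⁻¹ * Aᵀ + R⁻¹ * Bᵀ) *ᵥ g) = K *ᵥ xs - us := by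
    simp only [xs, us, mulVec_neg, add_mulVec, ← mulVec_mulVec]
    abel
  have hRsymm : R.IsSymm := isHermitian_iff_isSymm.mp hR.isHermitian
  have hvalue : J2cost A B Q R K a (K *ᵥ xs - us) = xs ⬝ᵥ Q *ᵥ xs + us ⬝ᵥ R *ᵥ us := by
    rw [J2cost_eq_dotProduct_add Q hRsymm, muKb_mulVec_sub_eq hAK hcon, sub_sub_cancel]
  rw [hbK, hvalue]
  refine ⟨fun b => ?_, ?_⟩
  · rw [J2cost_eq_dotProduct_add Q hRsymm]
    refine hQ.posSemidef.dotProduct_mulVec_add_le_of_stationary hR.posSemidef hQxs hRus ?_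
    rw [mulVec_muKb_sub hAK, hcon]
  · rw [dotProduct_mulVec_add_eq_of_stationary hQxs hRus, hcon, neg_dotProduct, neg_neg]

/-- Optimal intercept for the drifted LQR: with
`b^K = -(K Q⁻¹ Aᵀ + R⁻¹ Bᵀ) Γ⁻¹ a`, `J₂(K,b) ≥ J₂(K,b^K)` for all `b`, and
`J₂(K,b^K) = aᵀ Γ⁻¹ a`, which does not depend on `K`. -/
theorem optimal_intercept {d k : ℕ} (hd : 0 < d) (hk : 0 < k)
    (A : Matrix (Fin d) (Fin d) ℝ) (B : Matrix (Fin d) (Fin k) ℝ)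
    (Q : Matrix (Fin d) (Fin d) ℝ) (R : Matrix (Fin k) (Fin k) ℝ)
    (hQ : Q.PosDef) (hR : R.PosDef)
    (a : Fin d → ℝ) (K : Matrix (Fin k) (Fin d) ℝ)
    (hAK : IsUnit (A - B * K))
    (hΓ : IsUnit (A * Q⁻¹ * Aᵀ + B * R⁻¹ * Bᵀ)) :
    (∀ b : Fin k → ℝ,
      J2cost A B Q R K a
        (-((K * Q⁻¹ * Aᵀ + R⁻¹ * Bᵀ) *ᵥ ((A * Q⁻¹ * Aᵀ + B * R⁻¹ * Bᵀ)⁻¹ *ᵥ a))) ≤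
      J2cost A B Q R K a b) ∧
    J2cost A B Q R K a
        (-((K * Q⁻¹ * Aᵀ + R⁻¹ * Bᵀ) *ᵥ ((A * Q⁻¹ * Aᵀ + B * R⁻¹ * Bᵀ)⁻¹ *ᵥ a))) =
      a ⬝ᵥ ((A * Q⁻¹ * Aᵀ + B * R⁻¹ * Bᵀ)⁻¹ *ᵥ a) :=
  optimal_intercept_general A B Q R hQ hR a K hAK hΓ

end
end

section
/- Fix a ∈ ℝ^d and K ∈ ℝ^{k×d} with A − BK invertible, assume Γ := A Q^{-1} Aᵀ + B R^{-1} Bᵀ is invertible, and set b^K := −( K Q^{-1} Aᵀ + R^{-1} Bᵀ ) Γ^{-1} a. Then the corresponding stationary mean μ^K := −(A − BK)^{-1}(a + B b^K) satisfies μ^K = −Q^{-1} Aᵀ Γ^{-1} a; in particular μ^K does not depend on K. -/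
open Matrix MeasureTheory

noncomputable section

attribute [local instance] Matrix.normedAddCommGroup Matrix.normedSpace

/-! The feedback terms cancel: `(A - BK) Q⁻¹Aᵀ + B (K Q⁻¹Aᵀ + R⁻¹Bᵀ) = Γ`. Applied to `Γ⁻¹ a`
this says `a + B b^K = (A - BK) Q⁻¹Aᵀ Γ⁻¹ a`, and `(A - BK)⁻¹` undoes the left factor. -/

theorem Matrix.inv_mulVec_sub_eq_of_mul_add_eq {m n α : Type*} [Fintype m] [DecidableEq m]
    [Fintype n] [CommRing α] {L G M : Matrix m m α} {B : Matrix m n α} {N : Matrix n m α}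
    (hL : IsUnit L) (hG : IsUnit G) (h : L * M + B * N = G) (a : m → α) :
    L⁻¹ *ᵥ (a - B *ᵥ (N *ᵥ (G⁻¹ *ᵥ a))) = (M * G⁻¹) *ᵥ a := by
  have hsub : a - B *ᵥ (N *ᵥ (G⁻¹ *ᵥ a)) = L *ᵥ (M *ᵥ (G⁻¹ *ᵥ a)) := by
    rw [sub_eq_iff_eq_add]
    calc a = (L * M + B * N) *ᵥ (G⁻¹ *ᵥ a) := by
          rw [h, mulVec_mulVec, mul_nonsing_inv G ((isUnit_iff_isUnit_det G).1 hG), one_mulVec]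
      _ = L *ᵥ (M *ᵥ (G⁻¹ *ᵥ a)) + B *ᵥ (N *ᵥ (G⁻¹ *ᵥ a)) := by
          simp only [mulVec_mulVec, Matrix.add_mul, add_mulVec, Matrix.mul_assoc]
  rw [hsub, mulVec_mulVec, nonsing_inv_mul L ((isUnit_iff_isUnit_det L).1 hL), one_mulVec,
    mulVec_mulVec]

theorem stationary_mean_independent_of_K_general {d k : ℕ}
    (A : Matrix (Fin d) (Fin d) ℝ) (B : Matrix (Fin d) (Fin k) ℝ)
    (Q : Matrix (Fin d) (Fin d) ℝ) (R : Matrix (Fin k) (Fin k) ℝ)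
    (a : Fin d → ℝ) (K : Matrix (Fin k) (Fin d) ℝ)
    (hAK : IsUnit (A - B * K))
    (hΓ : IsUnit (A * Q⁻¹ * Aᵀ + B * R⁻¹ * Bᵀ)) :
    -((A - B * K)⁻¹ *ᵥ
        (a + B *ᵥ
          (-((K * Q⁻¹ * Aᵀ + R⁻¹ * Bᵀ) *ᵥ ((A * Q⁻¹ * Aᵀ + B * R⁻¹ * Bᵀ)⁻¹ *ᵥ a))))) =
      -((Q⁻¹ * Aᵀ * (A * Q⁻¹ * Aᵀ + B * R⁻¹ * Bᵀ)⁻¹) *ᵥ a) := by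
  have feedback_cancels : (A - B * K) * (Q⁻¹ * Aᵀ) + B * (K * Q⁻¹ * Aᵀ + R⁻¹ * Bᵀ) =
      A * Q⁻¹ * Aᵀ + B * R⁻¹ * Bᵀ := by
    simp only [Matrix.sub_mul, Matrix.mul_add, Matrix.mul_assoc]
    abel
  rw [mulVec_neg, ← sub_eq_add_neg,
    inv_mulVec_sub_eq_of_mul_add_eq hAK hΓ feedback_cancels a]

/-- With `b^K = -(K Q⁻¹ Aᵀ + R⁻¹ Bᵀ) Γ⁻¹ a`, the stationary mean
`μ^K = -(A - BK)⁻¹ (a + B b^K)` equals `-Q⁻¹ Aᵀ Γ⁻¹ a`, independently of `K`. -/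
theorem stationary_mean_independent_of_K {d k : ℕ} (hd : 0 < d) (hk : 0 < k)
    (A : Matrix (Fin d) (Fin d) ℝ) (B : Matrix (Fin d) (Fin k) ℝ)
    (Q : Matrix (Fin d) (Fin d) ℝ) (R : Matrix (Fin k) (Fin k) ℝ)
    (hQ : Q.PosDef) (hR : R.PosDef)
    (a : Fin d → ℝ) (K : Matrix (Fin k) (Fin d) ℝ)
    (hAK : IsUnit (A - B * K))
    (hΓ : IsUnit (A * Q⁻¹ * Aᵀ + B * R⁻¹ * Bᵀ)) :
    -((A - B * K)⁻¹ *ᵥ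
        (a + B *ᵥ
          (-((K * Q⁻¹ * Aᵀ + R⁻¹ * Bᵀ) *ᵥ ((A * Q⁻¹ * Aᵀ + B * R⁻¹ * Bᵀ)⁻¹ *ᵥ a))))) =
      -((Q⁻¹ * Aᵀ * (A * Q⁻¹ * Aᵀ + B * R⁻¹ * Bᵀ)⁻¹) *ᵥ a) :=
  stationary_mean_independent_of_K_general A B Q R a K hAK hΓ

end
end
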